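/- Observationally equivalent physical models need not be isomorphic: the computable physical models ({0,1}, {α}) with α(s) = s, and ({0,1,2}, {β}) with β(s) = ⌊s/2⌋, are observationally equivalent but not isomorphic. -/

import Mathlib

/-!
Each model has a single observable, taking the values {0, 1} on its states, so each maps
epimorphically onto the reduced model whose states are those values and whose observable is the
identity. An isomorphism, on the other hand, would biject a two-state set onto a three-state set.
-/

universe u v w

/-- Isomorphism of physical models: bijections `φ : S → T` and `ψ : A → B` with
`α(s) = ψ(α)(φ(s))` for all `s ∈ S` and all `α ∈ A`. -/
def Isomorphic {σ : Type*} {τ : Type*} {V : Type*}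
    (S : Set σ) (A : Set (σ → V)) (T : Set τ) (B : Set (τ → V)) : Prop :=
  ∃ (φ : σ → τ) (ψ : (σ → V) → τ → V),
    Set.BijOn φ S T ∧ Set.BijOn ψ A B ∧ ∀ s ∈ S, ∀ α ∈ A, α s = ψ α (φ s)

/-- A physical model `(S, A)` is reduced iff any two distinct states are separated by
some observable quantity. -/
def Reduced {σ : Type*} {V : Type*} (S : Set σ) (A : Set (σ → V)) : Prop :=
  ∀ s₁ ∈ S, ∀ s₂ ∈ S, s₁ ≠ s₂ → ∃ α ∈ A, α s₁ ≠ α s₂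

/-- An epimorphism from `(S, A)` to `(T, B)`: a surjection `φ` from `S` onto `T` and a
bijection `ψ : A → B` with `α(s) = ψ(α)(φ(s))` for all `s ∈ S` and `α ∈ A`. -/
def Epimorphism {σ : Type*} {τ : Type*} {V : Type*}
    (S : Set σ) (A : Set (σ → V)) (T : Set τ) (B : Set (τ → V)) : Prop :=
  ∃ (φ : σ → τ) (ψ : (σ → V) → τ → V),
    Set.MapsTo φ S T ∧ Set.SurjOn φ S T ∧ Set.BijOn ψ A B ∧
    ∀ s ∈ S, ∀ α ∈ A, α s = ψ α (φ s)

/-- Two physical models are observationally equivalent iff there exist epimorphisms from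
each of them to a common reduced physical model. -/
def ObsEquiv {σ₁ : Type u} {σ₂ : Type v} {V : Type w}
    (S₁ : Set σ₁) (A₁ : Set (σ₁ → V)) (S₂ : Set σ₂) (A₂ : Set (σ₂ → V)) : Prop :=
  ∃ (τ : Type (max u v w)) (T : Set τ) (B : Set (τ → V)),
    Reduced T B ∧ Epimorphism S₁ A₁ T B ∧ Epimorphism S₂ A₂ T B

open Set Function

section

variable {σ τ V : Type*}

lemma reduced_singleton_of_injective (T : Set τ) {β : τ → V} (hβ : Injective β) :
    Reduced T {β} :=
  fun _ _ _ _ hne => ⟨β, mem_singleton β, hβ.ne hne⟩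

lemma epimorphism_singleton_image (S : Set σ) {α : σ → V} {β : τ → V} {φ : σ → τ}
    (h : ∀ s ∈ S, α s = β (φ s)) : Epimorphism S {α} (φ '' S) {β} := by
  refine ⟨φ, fun _ => β, mapsTo_image φ S, surjOn_image φ S, ?_, ?_⟩
  · exact ⟨mapsTo_singleton.2 rfl, injOn_singleton _ _, fun _ hb => ⟨α, rfl, hb.symm⟩⟩
  · rintro s hs _ rfl
    exact h s hs

lemma Isomorphic.encard_eq {S : Set σ} {A : Set (σ → V)} {T : Set τ} {B : Set (τ → V)}
    (h : Isomorphic S A T B) : S.encard = T.encard := by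
  obtain ⟨φ, -, hφ, -, -⟩ := h
  rw [← hφ.image_eq, hφ.injOn.encard_image]

end

theorem obsEquiv_singleton_of_image_eq {σ₁ : Type u} {σ₂ : Type v} {V : Type w}
    {S₁ : Set σ₁} {S₂ : Set σ₂} {α₁ : σ₁ → V} {α₂ : σ₂ → V} (h : α₁ '' S₁ = α₂ '' S₂) :
    ObsEquiv S₁ {α₁} S₂ {α₂} := by
  refine ⟨ULift.{max u v} V, ULift.up '' (α₁ '' S₁), {ULift.down},
    reduced_singleton_of_injective _ ULift.down_injective, ?_, ?_⟩
  · rw [← image_comp]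
    exact epimorphism_singleton_image S₁ fun _ _ => rfl
  · rw [h, ← image_comp]
    exact epimorphism_singleton_image S₂ fun _ _ => rfl

/-- Observationally equivalent physical models need not be isomorphic:
the computable physical models `({0,1}, {α})` with `α(s) = s` and `({0,1,2}, {β})` with
`β(s) = ⌊s/2⌋` are observationally equivalent but not isomorphic. -/
theorem obsEquiv_not_isomorphic :
    ObsEquiv ({0, 1} : Set ℕ) ({fun s : ℕ => s} : Set (ℕ → ℕ))
        ({0, 1, 2} : Set ℕ) ({fun s : ℕ => s / 2} : Set (ℕ → ℕ)) ∧
      ¬ Isomorphic ({0, 1} : Set ℕ) ({fun s : ℕ => s} : Set (ℕ → ℕ))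
        ({0, 1, 2} : Set ℕ) ({fun s : ℕ => s / 2} : Set (ℕ → ℕ)) := by
  refine ⟨obsEquiv_singleton_of_image_eq ?_, fun hiso => ?_⟩
  · simp [image_insert_eq, pair_comm]
  · have h := hiso.encard_eq
    rw [encard_pair (by decide), encard_insert_of_notMem (by simp), encard_pair (by decide)] at h
    exact absurd h (by decide)
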